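/- arXiv:2405.14066 — 5 statements merged into one kernel-verified Lean document; each statement's English description precedes it below -/
import Mathlib

section
/- Every positive sublinear function g : ℤ₊ → ℝ₊ (i.e., g(n)/n → 0 as n → ∞) is bounded above by a concave sublinear function f : ℝ₊ → ℝ₊. -/
/-!
Put `b k = sup_{n ≥ k} |g n| / n` and `c k = ∑_{i < k} |g i|`. Every line `x ↦ b k * x + c k`
lies above `g` on the positive integers (`c k` covers `n < k`, `b k` covers `n ≥ k`), so their
lower envelope `f` does too. As an infimum of nonnegative affine functions `f` is concave and
nonnegative, and `f x / x ≤ b k + c k / x` with `b k → 0` makes it sublinear.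
-/

open Filter Set Finset Topology

theorem ConcaveOn.ciInf {ι E : Type*} [Nonempty ι] [AddCommMonoid E] [Module ℝ E] {s : Set E}
    {f : ι → E → ℝ} (hf : ∀ i, ConcaveOn ℝ s (f i))
    (hbdd : ∀ x ∈ s, BddBelow (Set.range fun i => f i x)) :
    ConcaveOn ℝ s fun x => ⨅ i, f i x := by
  refine ⟨(hf (Classical.arbitrary ι)).1, fun x hx y hy a b ha hb hab => le_ciInf fun i => ?_⟩
  dsimp only
  calc a • (⨅ i, f i x) + b • ⨅ i, f i y ≤ a • f i x + b • f i y := by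
        gcongr
        exacts [ciInf_le (hbdd x hx) i, ciInf_le (hbdd y hy) i]
    _ ≤ f i (a • x + b • y) := (hf i).2 hx hy ha hb hab

section TailSup

noncomputable def tailSup (u : ℕ → ℝ) (k : ℕ) : ℝ := ⨆ n, u (n + k)

variable {u : ℕ → ℝ}

theorem le_tailSup (hu : BddAbove (Set.range u)) {k n : ℕ} (hkn : k ≤ n) : u n ≤ tailSup u k := by
  have hu' : BddAbove (Set.range fun m => u (m + k)) :=
    hu.mono (by rintro _ ⟨m, rfl⟩; exact ⟨m + k, rfl⟩)
  simpa [tailSup, Nat.sub_add_cancel hkn] using le_ciSup hu' (n - k)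

theorem tailSup_nonneg (hu : BddAbove (Set.range u)) (hu0 : ∀ n, 0 ≤ u n) (k : ℕ) :
    0 ≤ tailSup u k :=
  (hu0 k).trans (le_tailSup hu le_rfl)

theorem exists_tailSup_lt {a ε : ℝ} (hu : Tendsto u atTop (𝓝 a)) (hε : a < ε) :
    ∃ k, tailSup u k < ε := by
  obtain ⟨b, hab, hbε⟩ := exists_between hε
  obtain ⟨k, hk⟩ := (hu.eventually (gt_mem_nhds hab)).exists_forall_of_atTop
  exact ⟨k, (ciSup_le fun n => (hk (n + k) (Nat.le_add_left k n)).le).trans_lt hbε⟩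

end TailSup

section AffineInf

variable {ι : Type*} {b c : ι → ℝ}

noncomputable def affineInf (b c : ι → ℝ) (x : ℝ) : ℝ := ⨅ i, (b i * x + c i)

variable (hb : ∀ i, 0 ≤ b i) (hc : ∀ i, 0 ≤ c i)
include hb hc

theorem bddBelow_range_affine {x : ℝ} (hx : 0 ≤ x) :
    BddBelow (Set.range fun i => b i * x + c i) :=
  ⟨0, Set.forall_mem_range.2 fun i => by have := hb i; have := hc i; positivity⟩

theorem affineInf_le {x : ℝ} (hx : 0 ≤ x) (i : ι) : affineInf b c x ≤ b i * x + c i :=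
  ciInf_le (bddBelow_range_affine hb hc hx) i

variable [Nonempty ι]

theorem affineInf_nonneg {x : ℝ} (hx : 0 ≤ x) : 0 ≤ affineInf b c x :=
  le_ciInf fun i => by have := hb i; have := hc i; positivity

theorem concaveOn_affineInf : ConcaveOn ℝ (Ici 0) (affineInf b c) :=
  ConcaveOn.ciInf
    (fun i => ((concaveOn_id (convex_Ici 0)).smul (hb i)).add_const (c i))
    (fun _ hx => bddBelow_range_affine hb hc hx)

theorem tendsto_affineInf_div_atTop (hsmall : ∀ ε > 0, ∃ i, b i < ε) :
    Tendsto (fun x => affineInf b c x / x) atTop (𝓝 0) := by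
  refine tendsto_order.2 ⟨fun a ha => ?_, fun ε hε => ?_⟩
  · filter_upwards [eventually_gt_atTop 0] with x hx
    exact ha.trans_le (div_nonneg (affineInf_nonneg hb hc hx.le) hx.le)
  · obtain ⟨i, hi⟩ := hsmall ε hε
    have hline : Tendsto (fun x : ℝ => b i + c i / x) atTop (𝓝 (b i)) := by
      simpa using tendsto_const_nhds.add (tendsto_const_nhds.div_atTop (tendsto_id (α := ℝ)))
    filter_upwards [hline.eventually (gt_mem_nhds hi), eventually_gt_atTop 0] with x hlt hx
    calc affineInf b c x / x ≤ (b i * x + c i) / x := by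
          gcongr; exact affineInf_le hb hc hx.le i
      _ = b i + c i / x := by field_simp
      _ < ε := hlt

end AffineInf

theorem le_tailSup_mul_add_sum_abs (g : ℕ → ℝ) (hg : BddAbove (Set.range fun n => |g n / n|))
    {n : ℕ} (hn : n ≠ 0) (k : ℕ) :
    g n ≤ tailSup (fun n => |g n / n|) k * n + ∑ i ∈ range k, |g i| := by
  have hc : 0 ≤ ∑ i ∈ range k, |g i| := sum_nonneg fun i _ => abs_nonneg _
  rcases le_or_gt k n with hkn | hnk
  · have hb : |g n / n| ≤ tailSup (fun n => |g n / n|) k := le_tailSup hg hkn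
    calc g n ≤ |g n / n| * n := by
          rw [abs_div, Nat.abs_cast, div_mul_cancel₀ _ (Nat.cast_ne_zero.2 hn)]
          exact le_abs_self _
      _ ≤ tailSup (fun n => |g n / n|) k * n := by gcongr
      _ ≤ _ := le_add_of_nonneg_right hc
  · have hb := tailSup_nonneg hg (fun n => abs_nonneg (g n / n)) k
    calc g n ≤ |g n| := le_abs_self _
      _ ≤ ∑ i ∈ range k, |g i| := single_le_sum (fun i _ => abs_nonneg (g i)) (mem_range.2 hnk)
      _ ≤ _ := le_add_of_nonneg_left (by positivity)

theorem stmt0_general (g : ℕ → ℝ)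
    (hgsub : Tendsto (fun n : ℕ => g n / n) atTop (nhds 0)) :
    ∃ f : ℝ → ℝ, ConcaveOn ℝ (Set.Ici 0) f ∧ (∀ x : ℝ, 0 ≤ x → 0 ≤ f x) ∧
      Tendsto (fun x : ℝ => f x / x) atTop (nhds 0) ∧
      ∀ n : ℕ, 1 ≤ n → g n ≤ f n := by
  set u : ℕ → ℝ := fun n => |g n / n|
  have hu : Tendsto u atTop (𝓝 0) := by simpa using hgsub.abs
  have hb : ∀ k, 0 ≤ tailSup u k := tailSup_nonneg hu.bddAbove_range fun n => abs_nonneg _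
  have hc : ∀ k, 0 ≤ ∑ i ∈ range k, |g i| := fun k => sum_nonneg fun i _ => abs_nonneg _
  refine ⟨affineInf (tailSup u) (fun k => ∑ i ∈ range k, |g i|), concaveOn_affineInf hb hc,
    fun x hx => affineInf_nonneg hb hc hx,
    tendsto_affineInf_div_atTop hb hc fun ε hε => exists_tailSup_lt hu hε, fun n hn => ?_⟩
  exact le_ciInf fun k => le_tailSup_mul_add_sum_abs g hu.bddAbove_range (by omega) k

/-- Every positive sublinear function `g : ℤ₊ → ℝ₊` (i.e. `g n / n → 0`) is bounded
above by a concave sublinear function `f : ℝ₊ → ℝ₊`. -/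
theorem stmt0 (g : ℕ → ℝ) (hgpos : ∀ n : ℕ, 1 ≤ n → 0 < g n)
    (hgsub : Tendsto (fun n : ℕ => g n / n) atTop (nhds 0)) :
    ∃ f : ℝ → ℝ, ConcaveOn ℝ (Set.Ici 0) f ∧ (∀ x : ℝ, 0 ≤ x → 0 ≤ f x) ∧
      Tendsto (fun x : ℝ => f x / x) atTop (nhds 0) ∧
      ∀ n : ℕ, 1 ≤ n → g n ≤ f n :=
  stmt0_general g hgsub
end

section
/- The Deterministic Weighted Majority Algorithm run with N experts and learning rate η = 1/2 makes at most 3(min_{i∈[N]} M_i + log₂ N) mistakes, where M_i is the number of mistakes made by expert i. -/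
/-!
Potential argument: the total weight `W_t = ∑ᵢ wᵢ(t)` starts at `N` and never increases, and on
a round where the weighted majority errs at least half of it sits on erring experts and is
halved, so `W` shrinks by a factor `3/4`. Hence `2^{-Mᵢ} = wᵢ(T) ≤ W_T ≤ N (3/4)^m` for the
number `m` of mistakes, and taking `log₂` with `(3/4)^3 ≤ 1/2` gives `m ≤ 3 (Mᵢ + log₂ N)`.
-/

open Finset

theorem eq_mul_pow_card_filter_of_step {a : ℕ → ℝ} {c : ℝ} (p : ℕ → Prop) [DecidablePred p]
    (hstep : ∀ t, a (t + 1) = if p t then a t * c else a t) (t : ℕ) :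
    a t = a 0 * c ^ #{s ∈ range t | p s} := by
  induction t with
  | zero => simp
  | succ t ih =>
    rw [hstep, range_add_one, filter_insert]
    by_cases h : p t
    · rw [if_pos h, if_pos h, card_insert_of_notMem (by simp), pow_succ, ih, mul_assoc]
    · rw [if_neg h, if_neg h, ih]

theorem le_mul_pow_card_filter_of_step {a : ℕ → ℝ} {c : ℝ} (hc : 0 ≤ c) (p : ℕ → Prop)
    [DecidablePred p] (hstep : ∀ t, a (t + 1) ≤ if p t then a t * c else a t) (t : ℕ) :
    a t ≤ a 0 * c ^ #{s ∈ range t | p s} := by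
  induction t with
  | zero => simp
  | succ t ih =>
    have hstep := hstep t
    rw [range_add_one, filter_insert]
    by_cases h : p t
    · rw [if_pos h] at hstep
      rw [if_pos h, card_insert_of_notMem (by simp), pow_succ, ← mul_assoc]
      exact hstep.trans (mul_le_mul_of_nonneg_right ih hc)
    · rw [if_neg h] at hstep
      rw [if_neg h]
      exact hstep.trans ih

section WeightedMajority

variable {ι : Type*} [Fintype ι] (v : ι → ℝ) (e : ι → Bool) (y : Bool)

noncomputable def weightedMajority : Bool :=
  decide ((∑ i ∈ univ.filter (fun i => e i = false), v i) ≤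
    ∑ i ∈ univ.filter (fun i => e i = true), v i)

noncomputable def halveWrong : ι → ℝ := fun i => if e i ≠ y then v i / 2 else v i

theorem sum_right_le_sum_wrong_of_weightedMajority_ne (h : weightedMajority v e ≠ y) :
    ∑ i ∈ univ.filter (fun i => e i = y), v i ≤ ∑ i ∈ univ.filter (fun i => e i ≠ y), v i := by
  cases y <;> simp [weightedMajority] at h ⊢ <;> linarith

theorem sum_halveWrong :
    ∑ i, halveWrong v e y i =
      (∑ i ∈ univ.filter (fun i => e i ≠ y), v i) / 2 +
        ∑ i ∈ univ.filter (fun i => e i = y), v i := by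
  rw [← sum_filter_add_sum_filter_not univ (fun i => e i ≠ y), sum_div]
  simp only [not_not]
  congr 1 <;> refine sum_congr rfl fun i hi => ?_ <;> simp_all [halveWrong]

variable {v}

theorem sum_halveWrong_le_ite (hv : ∀ i, 0 ≤ v i) :
    ∑ i, halveWrong v e y i ≤
      if weightedMajority v e ≠ y then (∑ i, v i) * (3 / 4) else ∑ i, v i := by
  have htotal := sum_filter_add_sum_filter_not univ (fun i => e i ≠ y) v
  simp only [not_not] at htotal
  have hwrong : 0 ≤ ∑ i ∈ univ.filter (fun i => e i ≠ y), v i := sum_nonneg fun i _ => hv i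
  rw [sum_halveWrong, ← htotal]
  split_ifs with h
  · linarith [sum_right_le_sum_wrong_of_weightedMajority_ne v e y h]
  · linarith

end WeightedMajority

theorem three_mul_logb_two_three_quarters_le : 3 * Real.logb 2 (3 / 4) ≤ -1 := by
  have h := Real.logb_le_logb_of_le (b := 2) one_lt_two (by norm_num)
    (show (3 / 4 : ℝ) ^ 3 ≤ 2⁻¹ by norm_num)
  rwa [Real.logb_pow, Real.logb_inv, Real.logb_self_eq_one one_lt_two] at h

theorem le_three_mul_of_inv_two_pow_le {m M : ℕ} {N : ℝ} (hN : 0 < N)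
    (h : (2 : ℝ)⁻¹ ^ M ≤ N * (3 / 4) ^ m) : (m : ℝ) ≤ 3 * (M + Real.logb 2 N) := by
  have hlog := Real.logb_le_logb_of_le (b := 2) one_lt_two (by positivity) h
  rw [Real.logb_mul hN.ne' (by positivity), Real.logb_pow, Real.logb_pow, Real.logb_inv,
    Real.logb_self_eq_one one_lt_two] at hlog
  nlinarith [three_mul_logb_two_three_quarters_le, (Nat.cast_nonneg m : (0 : ℝ) ≤ m)]

/-- The Deterministic Weighted Majority Algorithm run with `N` experts and learning rate
`η = 1/2` (each erring expert's weight is halved) makes at most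
`3 (min_i M_i + log₂ N)` mistakes, where `M_i` is the number of mistakes of expert `i`. -/
theorem stmt1 (N T : ℕ) (hN : 1 ≤ N)
    (experts : Fin N → ℕ → Bool) (labels : ℕ → Bool)
    (w : Fin N → ℕ → ℝ)
    (hw0 : ∀ i, w i 0 = 1)
    (hwstep : ∀ i t, w i (t + 1) = if experts i t ≠ labels t then w i t / 2 else w i t)
    (pred : ℕ → Bool)
    (hpred : ∀ t, pred t =
      decide ((∑ i ∈ univ.filter (fun i : Fin N => experts i t = false), w i t) ≤
        ∑ i ∈ univ.filter (fun i : Fin N => experts i t = true), w i t)) :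
    (∑ t ∈ range T, if pred t ≠ labels t then (1 : ℝ) else 0) ≤
      3 * ((univ.inf' (univ_nonempty_iff.mpr ⟨⟨0, hN⟩⟩)
          (fun i => ∑ t ∈ range T, if experts i t ≠ labels t then (1 : ℝ) else 0)) +
        Real.logb 2 N) := by
  have hweight (i : Fin N) (t : ℕ) :
      w i t = (2⁻¹ : ℝ) ^ #{s ∈ range t | experts i s ≠ labels s} := by
    have := eq_mul_pow_card_filter_of_step (a := (w i ·)) _
      (fun t => by rw [hwstep, div_eq_mul_inv]) t
    rwa [hw0, one_mul] at this
  have hnonneg (i : Fin N) (t : ℕ) : 0 ≤ w i t := by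
    rw [hweight]
    positivity
  have hpotential (t : ℕ) :
      ∑ i, w i t ≤ N * (3 / 4 : ℝ) ^ #{s ∈ range t | pred s ≠ labels s} := by
    refine (le_mul_pow_card_filter_of_step (a := fun t => ∑ i, w i t) (c := 3 / 4) (by norm_num)
      (fun s => pred s ≠ labels s)
      (fun t => ?_) t).trans_eq (by simp [hw0])
    have hupdate : ∑ i, w i (t + 1) = ∑ i, halveWrong (w · t) (experts · t) (labels t) i :=
      sum_congr rfl fun i _ => hwstep i t
    have hvote : pred t = weightedMajority (w · t) (experts · t) := hpred t
    rw [hupdate, hvote]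
    exact sum_halveWrong_le_ite _ _ (hnonneg · t)
  obtain ⟨i, -, hi⟩ := exists_mem_eq_inf' (univ_nonempty_iff.mpr ⟨⟨0, hN⟩⟩)
    (fun i => ∑ t ∈ range T, if experts i t ≠ labels t then (1 : ℝ) else 0)
  rw [hi]
  simp only [sum_boole]
  refine le_three_mul_of_inv_two_pow_le (by positivity) ?_
  calc (2⁻¹ : ℝ) ^ #{s ∈ range T | experts i s ≠ labels s} = w i T := (hweight i T).symm
    _ ≤ ∑ j, w j T := single_le_sum (f := (w · T)) (fun j _ => hnonneg j T) (mem_univ i)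
    _ ≤ _ := hpotential T
end

section
/- The Randomized Exponential Weights Algorithm run with N experts and learning rate η = √(8 ln N / T) over T rounds has expected number of mistakes at most min_{i∈[N]} M_i + √(T log₂ N), where M_i is the number of mistakes of expert i. -/
/-!
The total weight `W t = ∑ᵢ wᵢ(t)` is a potential. Since `W (t+1) / W t` is the moment generating
function at `-η` of the loss of an expert drawn with probability `wᵢ(t) / W t`, Hoeffding's lemma
gives `W (t+1) ≤ W t · exp (-η pₜ + η² / 8)`, where `pₜ` is the expected loss in round `t`. Hence
`exp (-η Lᵢ) ≤ W T ≤ N · exp (-η ∑ pₜ + T η² / 8)` for every expert `i`, i.e. the regret is at most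
`ln N / η + η T / 8`, which equals `√(T ln N / 2) ≤ √(T log₂ N)` for the chosen `η`.
-/

open Finset Real MeasureTheory ProbabilityTheory

theorem sum_mul_exp_le_exp_of_mem_Icc {ι : Type*} [Fintype ι] {q x : ι → ℝ}
    (hq : ∀ i, 0 ≤ q i) (hq1 : ∑ i, q i = 1) (hx : ∀ i, x i ∈ Set.Icc 0 1) (t : ℝ) :
    ∑ i, q i * exp (t * x i) ≤ exp (t * ∑ i, q i * x i + t ^ 2 / 8) := by
  let _ : MeasurableSpace ι := ⊤
  let p : PMF ι := PMF.ofFintype (fun i ↦ ENNReal.ofReal (q i)) <| by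
    rw [← ENNReal.ofReal_sum_of_nonneg fun i _ ↦ hq i, hq1, ENNReal.ofReal_one]
  have hp (f : ι → ℝ) : ∫ i, f i ∂p.toMeasure = ∑ i, q i * f i := by
    simp [p, PMF.integral_eq_sum, ENNReal.toReal_ofReal (hq _)]
  have hoeffding := (hasSubgaussianMGF_of_mem_Icc (μ := p.toMeasure) (a := 0) (b := 1)
    Measurable.of_discrete.aemeasurable (ae_of_all _ hx)).mgf_le t
  set m := ∑ i, q i * x i
  simp only [mgf, hp] at hoeffding
  calc ∑ i, q i * exp (t * x i) = exp (t * m) * ∑ i, q i * exp (t * (x i - m)) := by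
        rw [mul_sum]
        refine sum_congr rfl fun i _ ↦ ?_
        rw [mul_left_comm, ← exp_add]
        ring_nf
    _ ≤ exp (t * m) * exp (t ^ 2 / 8) := by
        gcongr
        refine hoeffding.trans_eq (congrArg exp ?_)
        norm_num
        ring
    _ = exp (t * m + t ^ 2 / 8) := (exp_add _ _).symm

namespace ExpWeights

variable {ι : Type*} (η : ℝ) (ℓ : ι → ℕ → ℝ)

noncomputable def weight (i : ι) (t : ℕ) : ℝ := exp (-η * ∑ s ∈ range t, ℓ i s)

lemma weight_pos (i : ι) (t : ℕ) : 0 < weight η ℓ i t := exp_pos _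

lemma weight_succ (i : ι) (t : ℕ) :
    weight η ℓ i (t + 1) = weight η ℓ i t * exp (-η * ℓ i t) := by
  rw [weight, weight, sum_range_succ, mul_add, exp_add]

variable [Fintype ι]

noncomputable def totalWeight (t : ℕ) : ℝ := ∑ i, weight η ℓ i t

noncomputable def expectedLoss (t : ℕ) : ℝ := (∑ i, weight η ℓ i t * ℓ i t) / totalWeight η ℓ t

lemma totalWeight_pos [Nonempty ι] (t : ℕ) : 0 < totalWeight η ℓ t :=
  sum_pos (fun i _ ↦ weight_pos η ℓ i t) univ_nonempty

lemma totalWeight_zero : totalWeight η ℓ 0 = Fintype.card ι := by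
  simp [totalWeight, weight]

lemma weight_le_totalWeight (i : ι) (t : ℕ) : weight η ℓ i t ≤ totalWeight η ℓ t :=
  single_le_sum (fun j _ ↦ (weight_pos η ℓ j t).le) (mem_univ i)

lemma expectedLoss_of_unique [Unique ι] (t : ℕ) : expectedLoss η ℓ t = ℓ default t := by
  rw [expectedLoss, totalWeight, Fintype.sum_unique, Fintype.sum_unique,
    mul_div_cancel_left₀ _ (weight_pos η ℓ _ t).ne']

variable {ℓ} [Nonempty ι] (hℓ : ∀ i t, ℓ i t ∈ Set.Icc 0 1)
include hℓ

lemma totalWeight_succ_le (t : ℕ) :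
    totalWeight η ℓ (t + 1) ≤ totalWeight η ℓ t * exp (-η * expectedLoss η ℓ t + η ^ 2 / 8) := by
  set W := totalWeight η ℓ t
  have hW : 0 < W := totalWeight_pos η ℓ t
  have hq1 : ∑ i, weight η ℓ i t / W = 1 := by rw [← sum_div]; exact div_self hW.ne'
  calc totalWeight η ℓ (t + 1) = W * ∑ i, weight η ℓ i t / W * exp (-η * ℓ i t) := by
        simp only [totalWeight, weight_succ, mul_sum]
        refine sum_congr rfl fun i _ ↦ ?_
        field_simp
    _ ≤ W * exp (-η * ∑ i, weight η ℓ i t / W * ℓ i t + η ^ 2 / 8) := by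
        gcongr
        exact sum_mul_exp_le_exp_of_mem_Icc (fun i ↦ (div_pos (weight_pos η ℓ i t) hW).le) hq1
          (fun i ↦ hℓ i t) (-η) |>.trans_eq (by rw [neg_sq])
    _ = W * exp (-η * expectedLoss η ℓ t + η ^ 2 / 8) := by
        rw [expectedLoss, sum_div]
        simp only [div_mul_eq_mul_div]
        rfl

lemma totalWeight_le (T : ℕ) :
    totalWeight η ℓ T ≤
      Fintype.card ι * exp (-η * ∑ t ∈ range T, expectedLoss η ℓ t + T * η ^ 2 / 8) := by
  induction T with
  | zero => simp [totalWeight_zero]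
  | succ T ih =>
    calc totalWeight η ℓ (T + 1)
        ≤ totalWeight η ℓ T * exp (-η * expectedLoss η ℓ T + η ^ 2 / 8) :=
          totalWeight_succ_le η hℓ T
      _ ≤ Fintype.card ι * exp (-η * ∑ t ∈ range T, expectedLoss η ℓ t + T * η ^ 2 / 8) *
            exp (-η * expectedLoss η ℓ T + η ^ 2 / 8) := by gcongr
      _ = _ := by
          rw [mul_assoc, ← exp_add, sum_range_succ]
          push_cast
          ring_nf

theorem sum_expectedLoss_le (hη : 0 < η) (T : ℕ) (i : ι) :
    ∑ t ∈ range T, expectedLoss η ℓ t ≤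
      ∑ t ∈ range T, ℓ i t + log (Fintype.card ι) / η + η * T / 8 := by
  have hcard : (0 : ℝ) < Fintype.card ι := by exact_mod_cast Fintype.card_pos
  have hexp := (weight_le_totalWeight η ℓ i T).trans (totalWeight_le η hℓ T)
  rw [weight, ← log_le_log_iff (exp_pos _) (by positivity), log_mul hcard.ne' (exp_pos _).ne',
    log_exp, log_exp] at hexp
  refine le_of_mul_le_mul_left ?_ hη
  rw [mul_add, mul_add, mul_div_cancel₀ _ hη.ne']
  linarith

end ExpWeights

lemma log_div_add_mul_div_eight_le_sqrt {n T η : ℝ} (hn : 1 < n) (hT : 0 < T)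
    (hη : η = √(8 * log n / T)) :
    log n / η + η * T / 8 ≤ √(T * logb 2 n) := by
  have hlog : 0 < log n := log_pos hn
  have hη0 : 0 < η := hη ▸ sqrt_pos.mpr (by positivity)
  have hηsq : η ^ 2 = 8 * log n / T := hη ▸ sq_sqrt (by positivity)
  have hlog_eq : log n = η ^ 2 * T / 8 := by rw [hηsq]; field_simp
  have hlogb : log n / 2 ≤ logb 2 n :=
    div_le_div_of_nonneg_left hlog.le (log_pos one_lt_two) (log_two_lt_d9.le.trans (by norm_num))
  apply le_sqrt_of_sq_le
  calc (log n / η + η * T / 8) ^ 2 = T * (log n / 2) := by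
        rw [hlog_eq]; field_simp; ring
    _ ≤ T * logb 2 n := by gcongr

/-- The Randomized Exponential Weights Algorithm with `N` experts and learning rate
`η = √(8 ln N / T)` over `T` rounds has expected number of mistakes (sampling an expert
proportionally to the exponential weights each round) at most
`min_i M_i + √(T log₂ N)`. -/
theorem stmt6 (N T : ℕ) (hN : 1 ≤ N) (hT : 1 ≤ T)
    (experts : Fin N → ℕ → Bool) (labels : ℕ → Bool)
    (loss : Fin N → ℕ → ℝ)
    (hloss : ∀ i t, loss i t = if experts i t = labels t then 0 else 1)
    (η : ℝ) (hη : η = Real.sqrt (8 * Real.log N / T))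
    (w : Fin N → ℕ → ℝ)
    (hw : ∀ i t, w i t = Real.exp (-η * ∑ s ∈ range t, loss i s)) :
    (∑ t ∈ range T, (∑ i : Fin N, w i t * loss i t) / (∑ i : Fin N, w i t)) ≤
      (univ.inf' (univ_nonempty_iff.mpr ⟨⟨0, hN⟩⟩)
          (fun i : Fin N => ∑ t ∈ range T, loss i t)) +
        Real.sqrt (T * Real.logb 2 N) := by
  have hloss01 (i t) : loss i t ∈ Set.Icc (0 : ℝ) 1 := by rw [hloss]; split_ifs <;> norm_num
  obtain rfl : w = ExpWeights.weight η loss := funext₂ hw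
  obtain ⟨i₀, -, hi₀⟩ := exists_mem_eq_inf' (univ_nonempty_iff.mpr ⟨⟨0, hN⟩⟩)
    (fun i : Fin N => ∑ t ∈ range T, loss i t)
  rw [hi₀]
  change ∑ t ∈ range T, ExpWeights.expectedLoss η loss t ≤ _
  obtain rfl | hN₂ := hN.eq_or_lt
  · simp [ExpWeights.expectedLoss_of_unique, Subsingleton.elim i₀ default]
  have hN₁ : (1 : ℝ) < N := Nat.one_lt_cast.mpr hN₂
  have hlogN : 0 < log N := log_pos hN₁
  have hη₀ : 0 < η := hη ▸ sqrt_pos.mpr (by positivity)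
  have : Nonempty (Fin N) := ⟨⟨0, hN⟩⟩
  calc _ ≤ ∑ t ∈ range T, loss i₀ t + log N / η + η * T / 8 := by
        simpa using ExpWeights.sum_expectedLoss_le η hloss01 hη₀ T i₀
    _ ≤ _ := by
        rw [add_assoc]
        gcongr
        exact log_div_add_mul_div_eight_le_sqrt hN₁ (Nat.cast_pos.mpr hT) hη
end

section
/- Consider binary prediction on a sequence of N = 2^k − 1 points presented in dyadic order, where the learner at each round outputs a probability p̂_t of predicting 1 and the adversary then reveals a label consistent with some threshold over the sorted sequence (i.e., the labels in sorted order form a pattern 1…10…0). The adversary can force expected mistakes at least k/2 = (1/2)·log₂(N+1) while keeping the version space of consistent thresholds nonempty. -/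
open Finset

/-- The sorted position (in `{1, …, 2^k − 1}`) of the `t`-th point (0-indexed) presented
in dyadic (binary-search) order. -/
def dyd (k t : ℕ) : ℕ :=
  (2 * (t + 1 - 2 ^ Nat.log2 (t + 1)) + 1) * 2 ^ (k - (Nat.log2 (t + 1) + 1))

/-!
Number the points in heap order: point `t` is node `t + 1` of the complete binary tree of depth
`k`, node `u` sits at depth `Nat.log2 u` and has children `2u`, `2u + 1`, and the leaves
`2^k ≤ c < 2^(k+1)` stand for the thresholds `c - 2^k`. Presenting the points in dyadic order is
then a breadth-first traversal, and the threshold labels of a node only depend on which half of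
its subtree the leaf lies in. The adversary walks from the root to a leaf, at each depth
choosing the half that makes the learner's current prediction wrong with probability at least
`1/2`; the labels already shown are the same for every leaf below the current node, so this
choice is consistent. The `k` nodes on the path contribute at least `1/2` each.
-/

/-- The first leaf of the right subtree of node `u`. -/
def midLeaf (k u : ℕ) : ℕ := (2 * u + 1) * 2 ^ (k - (Nat.log2 u + 1))

lemma dyd_add_two_pow {k t : ℕ} (ht : Nat.log2 (t + 1) < k) :
    dyd k t + 2 ^ k = midLeaf k (t + 1) := by
  have hl : 2 ^ Nat.log2 (t + 1) ≤ t + 1 := Nat.log2_self_le (Nat.succ_ne_zero t)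
  have hk : 2 ^ k = 2 ^ Nat.log2 (t + 1) * 2 * 2 ^ (k - (Nat.log2 (t + 1) + 1)) := by
    rw [← pow_succ, ← pow_add]
    congr 1
    omega
  rw [dyd, midLeaf, hk, ← add_mul]
  congr 1
  omega

/-- Node `a` at depth `j` owns the leaves in `[a * 2^(k-j), (a+1) * 2^(k-j))`. Midpoints of
shallower nodes are multiples of `2^(k-j)`, and those of earlier nodes at depth `j` lie to the
left of this range. -/
lemma midLeaf_le_or_ge {k j u a : ℕ} (hjk : j < k) (hua : u < a) (hu : Nat.log2 u ≤ j) :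
    midLeaf k u ≤ a * 2 ^ (k - j) ∨ (a + 1) * 2 ^ (k - j) ≤ midLeaf k u := by
  rcases hu.lt_or_eq with hlt | heq
  · have hmul : midLeaf k u = (2 * u + 1) * 2 ^ (j - (Nat.log2 u + 1)) * 2 ^ (k - j) := by
      rw [midLeaf, mul_assoc, ← pow_add]
      congr 2
      omega
    rw [hmul]
    rcases le_or_gt ((2 * u + 1) * 2 ^ (j - (Nat.log2 u + 1))) a with h | h
    · exact Or.inl (Nat.mul_le_mul_right _ h)
    · exact Or.inr (Nat.mul_le_mul_right _ h)
  · left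
    have hpow : 2 ^ (k - j) = 2 * 2 ^ (k - (j + 1)) := by
      rw [← pow_succ']
      congr 1
      omega
    rw [midLeaf, heq, hpow, ← mul_assoc]
    exact Nat.mul_le_mul_right _ (by omega)

def thresholdLabel (k r t : ℕ) : Bool := decide (dyd k t ≤ r)

lemma thresholdLabel_eq_of_div_eq {k j a c t : ℕ} (hjk : j < k) (ha : 2 ^ j ≤ a)
    (ha' : a < 2 ^ (j + 1)) (hc : c / 2 ^ (k - j) = a) (ht : t + 1 < a) :
    thresholdLabel k (c - 2 ^ k) t = decide (midLeaf k (t + 1) ≤ a * 2 ^ (k - j)) := by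
  have hs : 0 < 2 ^ (k - j) := by positivity
  have hlo : a * 2 ^ (k - j) ≤ c := hc ▸ Nat.div_mul_le_self c _
  have hhi : c < a * 2 ^ (k - j) + 2 ^ (k - j) := hc ▸ Nat.lt_div_mul_add hs
  have hk : 2 ^ k ≤ a * 2 ^ (k - j) := by
    rw [← pow_mul_pow_sub 2 hjk.le]
    exact Nat.mul_le_mul_right _ ha
  have hlog : Nat.log2 (t + 1) ≤ j :=
    Nat.lt_succ_iff.mp ((Nat.log2_lt (Nat.succ_ne_zero t)).mpr (by omega))
  have hmid := dyd_add_two_pow (lt_of_le_of_lt hlog hjk)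
  have hsplit := midLeaf_le_or_ge hjk ht hlog
  rw [add_one_mul] at hsplit
  rw [thresholdLabel, decide_eq_decide]
  omega

/-- By `thresholdLabel_eq_of_div_eq`, the labels shown before node `a` at depth `j` is reached
are the same for every threshold below `a`; this takes the leftmost one. -/
def subtreeHistory (k j a : ℕ) : List Bool :=
  (List.range (a - 1)).map (thresholdLabel k (a * 2 ^ (k - j) - 2 ^ k))

/-- Moving from node `a` to its right child `2a + 1` means revealing label `1` at `a`, so the
adversary contradicts whichever prediction the learner makes with probability at least `1/2`. -/
noncomputable def adversaryNode (k : ℕ) (L : List Bool → ℝ) : ℕ → ℕ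
  | 0 => 1
  | j + 1 =>
    2 * adversaryNode k L j +
      if L (subtreeHistory k j (adversaryNode k L j)) ≤ 1 / 2 then 1 else 0

section adversaryNode

variable (k : ℕ) (L : List Bool → ℝ)

lemma adversaryNode_succ_div_two (j : ℕ) :
    adversaryNode k L (j + 1) / 2 = adversaryNode k L j := by
  rw [adversaryNode]
  split <;> omega

lemma adversaryNode_add_div_two_pow (i d : ℕ) :
    adversaryNode k L (i + d) / 2 ^ d = adversaryNode k L i := by
  induction d with
  | zero => simp
  | succ d ih =>
    rw [← add_assoc, pow_succ', ← Nat.div_div_eq_div_mul, adversaryNode_succ_div_two, ih]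

lemma adversaryNode_div_two_pow {i j : ℕ} (h : i ≤ j) :
    adversaryNode k L j / 2 ^ (j - i) = adversaryNode k L i := by
  simpa [Nat.add_sub_cancel' h] using adversaryNode_add_div_two_pow k L i (j - i)

lemma adversaryNode_mem_Ico (j : ℕ) : adversaryNode k L j ∈ Set.Ico (2 ^ j) (2 ^ (j + 1)) := by
  have h : adversaryNode k L j / 2 ^ j = 1 := adversaryNode_div_two_pow k L (Nat.zero_le j)
  rw [Nat.div_eq_iff (by positivity)] at h
  rw [Set.mem_Ico, pow_succ]
  have : 0 < 2 ^ j := by positivity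
  omega

lemma strictMono_adversaryNode_sub_one : StrictMono fun j => adversaryNode k L j - 1 := by
  refine strictMono_nat_of_lt_succ fun j => ?_
  have h := adversaryNode_succ_div_two k L j
  have h₀ := (adversaryNode_mem_Ico k L j).1
  have : 1 ≤ 2 ^ j := Nat.one_le_two_pow
  omega

variable {k}

lemma history_adversaryNode {j : ℕ} (hj : j < k) :
    (List.range (adversaryNode k L j - 1)).map (thresholdLabel k (adversaryNode k L k - 2 ^ k)) =
      subtreeHistory k j (adversaryNode k L j) := by
  obtain ⟨hlo, hhi⟩ := adversaryNode_mem_Ico k L j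
  refine List.map_congr_left fun t ht => ?_
  have ht : t + 1 < adversaryNode k L j := by rw [List.mem_range] at ht; omega
  rw [thresholdLabel_eq_of_div_eq hj hlo hhi (adversaryNode_div_two_pow k L hj.le) ht,
    thresholdLabel_eq_of_div_eq hj hlo hhi (Nat.mul_div_cancel _ (by positivity)) ht]

lemma thresholdLabel_adversaryNode {j : ℕ} (hj : j < k) :
    thresholdLabel k (adversaryNode k L k - 2 ^ k) (adversaryNode k L j - 1) =
      decide (L (subtreeHistory k j (adversaryNode k L j)) ≤ 1 / 2) := by
  obtain ⟨hlo, hhi⟩ := adversaryNode_mem_Ico k L j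
  have hpos : 0 < adversaryNode k L j := lt_of_lt_of_le (by positivity) hlo
  have hlog : Nat.log2 (adversaryNode k L j) = j :=
    le_antisymm (Nat.lt_succ_iff.mp ((Nat.log2_lt hpos.ne').mpr hhi))
      ((Nat.le_log2 hpos.ne').mpr hlo)
  have hmid := dyd_add_two_pow (k := k) (t := adversaryNode k L j - 1)
    (by rw [Nat.sub_add_cancel hpos]; omega)
  rw [Nat.sub_add_cancel hpos, midLeaf, hlog] at hmid
  have hleaf := (adversaryNode_mem_Ico k L k).1
  have hchild : (2 * adversaryNode k L j + 1) * 2 ^ (k - (j + 1)) ≤ adversaryNode k L k ↔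
      2 * adversaryNode k L j + 1 ≤ adversaryNode k L (j + 1) := by
    rw [← adversaryNode_div_two_pow k L hj, Nat.le_div_iff_mul_le (by positivity)]
  rw [thresholdLabel, decide_eq_decide]
  by_cases hL : L (subtreeHistory k j (adversaryNode k L j)) ≤ 1 / 2
  · simp only [adversaryNode, hL, if_true] at hchild
    simp only [hL, iff_true]
    omega
  · simp only [adversaryNode, hL, if_false] at hchild
    simp only [hL, iff_false]
    omega

end adversaryNode

def expectedLoss (L : List Bool → ℝ) (y : ℕ → Bool) (t : ℕ) : ℝ :=
  if y t then 1 - L ((List.range t).map y) else L ((List.range t).map y)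

lemma expectedLoss_nonneg {L : List Bool → ℝ} (hL : ∀ hist, L hist ∈ Set.Icc (0 : ℝ) 1)
    (y : ℕ → Bool) (t : ℕ) : 0 ≤ expectedLoss L y t := by
  have := hL ((List.range t).map y)
  unfold expectedLoss
  split <;> linarith [this.1, this.2]

lemma half_le_expectedLoss {L : List Bool → ℝ} {y : ℕ → Bool} {t : ℕ}
    (h : y t = decide (L ((List.range t).map y) ≤ 1 / 2)) : 1 / 2 ≤ expectedLoss L y t := by
  unfold expectedLoss
  by_cases hL : L ((List.range t).map y) ≤ 1 / 2
  · simp only [h, hL, decide_true, if_true]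
    linarith
  · simp only [h, hL, decide_false, Bool.false_eq_true, if_false]
    linarith

lemma Finset.natCast_mul_le_sum_of_injective {α : Type*} [DecidableEq α] {f : α → ℝ}
    {g : ℕ → α} {n : ℕ} {s : Finset α} {b : ℝ} (hg : Function.Injective g)
    (hgs : ∀ j < n, g j ∈ s)
    (hb : ∀ j < n, b ≤ f (g j)) (hf : ∀ t ∈ s, 0 ≤ f t) : n * b ≤ ∑ t ∈ s, f t :=
  calc (n : ℝ) * b = ∑ _j ∈ range n, b := by simp
  _ ≤ ∑ j ∈ range n, f (g j) := sum_le_sum fun j hj => hb j (mem_range.mp hj)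
  _ = ∑ t ∈ (range n).image g, f t := (sum_image fun _ _ _ _ h => hg h).symm
  _ ≤ ∑ t ∈ s, f t :=
    sum_le_sum_of_subset_of_nonneg
      (image_subset_iff.mpr fun j hj => hgs j (mem_range.mp hj)) fun t ht _ => hf t ht

theorem stmt17_general (k N : ℕ) (hN : N = 2 ^ k - 1)
    (L : List Bool → ℝ) (hL : ∀ hist : List Bool, L hist ∈ Set.Icc (0 : ℝ) 1) :
    ∃ y : ℕ → Bool,
      (∃ r : ℕ, ∀ t : ℕ, t < N → y t = decide (dyd k t ≤ r)) ∧
      (k : ℝ) / 2 ≤ ∑ t ∈ range N,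
        (if y t then 1 - L ((List.range t).map y) else L ((List.range t).map y)) := by
  refine ⟨thresholdLabel k (adversaryNode k L k - 2 ^ k), ⟨_, fun _ _ => rfl⟩, ?_⟩
  have hround : ∀ j < k, 1 / 2 ≤
      expectedLoss L (thresholdLabel k (adversaryNode k L k - 2 ^ k)) (adversaryNode k L j - 1) :=
    fun j hj => half_le_expectedLoss <| by
      rw [history_adversaryNode L hj, thresholdLabel_adversaryNode L hj]
  have hmem : ∀ j < k, adversaryNode k L j - 1 ∈ range N := fun j hj => by
    have := (adversaryNode_mem_Ico k L j).2
    have : 2 ^ (j + 1) ≤ 2 ^ k := Nat.pow_le_pow_right two_pos hj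
    rw [mem_range]
    omega
  calc (k : ℝ) / 2 = k * (1 / 2) := by ring
  _ ≤ _ :=
    Finset.natCast_mul_le_sum_of_injective (strictMono_adversaryNode_sub_one k L).injective
      hmem hround fun t _ => expectedLoss_nonneg hL _ t

/-- Binary prediction on `N = 2^k − 1` points presented in dyadic order: the learner `L`
outputs a probability `p̂_t ∈ [0,1]` of predicting 1 given the history of labels; the
adversary can reveal labels consistent with some threshold over the sorted sequence
(pattern `1…10…0`) while forcing expected mistakes at least `k/2`. -/
theorem stmt17 (k N : ℕ) (hk : 1 ≤ k) (hN : N = 2 ^ k - 1)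
    (L : List Bool → ℝ) (hL : ∀ hist : List Bool, L hist ∈ Set.Icc (0 : ℝ) 1) :
    ∃ y : ℕ → Bool,
      (∃ r : ℕ, ∀ t : ℕ, t < N → y t = decide (dyd k t ≤ r)) ∧
      (k : ℝ) / 2 ≤ ∑ t ∈ range N,
        (if y t then 1 - L ((List.range t).map y) else L ((List.range t).map y)) :=
  stmt17_general k N hN L hL
end

section
/- Fix integers n ≥ 0 and T divisible by n+1. If a learner's expected regret is at most 3·min(A, B·(M+1), 6((M+1)·C(T/(M+1)+1) + log₂ T)) + 5, where M = M_P(x_{1:T}) and A, B are constants and C is concave sublinear, then whenever M = o(T) and C(T) = o(T) the bound is o(T). -/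
open Filter

/-- If a learner's expected regret is at most
`3 ⬝ min(A, B(M+1), 6((M+1) C(T/(M+1)+1) + log₂ T)) + 5` with `M = M(T) ≥ 0`, `A, B`
constants and `C : ℝ₊ → ℝ₊` concave sublinear, then whenever `M = o(T)` and
`C(T) = o(T)` the whole bound is `o(T)`. -/
theorem stmt18 (A B : ℝ) (M : ℕ → ℝ) (hM0 : ∀ T, 0 ≤ M T)
    (hM : Tendsto (fun T : ℕ => M T / T) atTop (nhds 0))
    (C : ℝ → ℝ) (hCc : ConcaveOn ℝ (Set.Ici 0) C)
    (hC0 : ∀ x : ℝ, 0 ≤ x → 0 ≤ C x)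
    (hCsub : Tendsto (fun x : ℝ => C x / x) atTop (nhds 0))
    (bound : ℕ → ℝ)
    (hbound : ∀ T : ℕ, bound T =
      3 * min A (min (B * (M T + 1))
        (6 * ((M T + 1) * C ((T : ℝ) / (M T + 1) + 1) + Real.logb 2 T))) + 5) :
    Tendsto (fun T : ℕ => bound T / T) atTop (nhds 0) := by
  -- abbreviations
  set y : ℕ → ℝ := fun T => B * (M T + 1) with hy_def
  set g : ℕ → ℝ := fun T => min A (y T) with hg_def
  -- y T / T → 0
  have hy : Tendsto (fun T : ℕ => y T / T) atTop (nhds 0) := by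
    have h1 : Tendsto (fun T : ℕ => B * (M T / T) + B / T) atTop (nhds 0) := by
      have := (hM.const_mul B).add (tendsto_const_div_atTop_nhds_zero_nat B)
      simpa using this
    refine h1.congr fun T => ?_
    simp only [hy_def]; ring
  -- A / T → 0
  have hA : Tendsto (fun T : ℕ => A / T) atTop (nhds 0) :=
    tendsto_const_div_atTop_nhds_zero_nat A
  -- g T / T → 0
  have hg : Tendsto (fun T : ℕ => g T / T) atTop (nhds 0) := by
    have := hA.min hy
    simp only [min_self] at this
    refine this.congr fun T => ?_
    rw [hg_def]
    exact min_div_div_right (Nat.cast_nonneg T) A (y T)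
  -- min g 0 / T → 0
  have hg0 : Tendsto (fun T : ℕ => min (g T) 0 / T) atTop (nhds 0) := by
    have := hg.min (tendsto_const_nhds (x := (0 : ℝ)))
    simp only [min_self] at this
    refine this.congr fun T => ?_
    have := min_div_div_right (Nat.cast_nonneg T) (g T) 0
    simpa using this
  -- limits of the squeezing sequences
  have hlo : Tendsto (fun T : ℕ => (3 * min (g T) 0 + 5) / T) atTop (nhds 0) := by
    have := (hg0.const_mul 3).add (tendsto_const_div_atTop_nhds_zero_nat 5)
    simp only [mul_zero, add_zero] at this
    refine this.congr fun T => ?_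
    ring
  have hhi : Tendsto (fun T : ℕ => (3 * g T + 5) / T) atTop (nhds 0) := by
    have := (hg.const_mul 3).add (tendsto_const_div_atTop_nhds_zero_nat 5)
    simp only [mul_zero, add_zero] at this
    refine this.congr fun T => ?_
    ring
  -- squeeze
  refine tendsto_of_tendsto_of_tendsto_of_le_of_le' hlo hhi ?_ ?_
  · filter_upwards [eventually_ge_atTop 1] with T hT
    rw [hbound T]
    have hM1 : (0:ℝ) < M T + 1 := by linarith [hM0 T]
    have hz : 0 ≤ 6 * ((M T + 1) * C ((T : ℝ) / (M T + 1) + 1) + Real.logb 2 T) := by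
      have harg : (0:ℝ) ≤ (T : ℝ) / (M T + 1) + 1 := by positivity
      have hC := hC0 _ harg
      have hlog : 0 ≤ Real.logb 2 T := by
        apply Real.logb_nonneg one_lt_two
        exact_mod_cast hT
      have := mul_nonneg hM1.le hC
      nlinarith
    have hmin : min (g T) 0 ≤ min A (min (y T)
        (6 * ((M T + 1) * C ((T : ℝ) / (M T + 1) + 1) + Real.logb 2 T))) := by
      rw [hg_def]
      refine le_min (le_trans (min_le_left _ _) (min_le_left _ _))
        (le_min (le_trans (min_le_left _ _) (min_le_right _ _))
          (le_trans (min_le_right _ _) hz))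
    have hT0 : (0:ℝ) < T := by exact_mod_cast Nat.lt_of_lt_of_le Nat.zero_lt_one hT
    gcongr
  · filter_upwards [eventually_ge_atTop 1] with T hT
    rw [hbound T]
    have hT0 : (0:ℝ) < T := by exact_mod_cast Nat.lt_of_lt_of_le Nat.zero_lt_one hT
    have hmin : min A (min (y T)
        (6 * ((M T + 1) * C ((T : ℝ) / (M T + 1) + 1) + Real.logb 2 T))) ≤ g T := by
      rw [hg_def]
      exact le_min (min_le_left _ _) (le_trans (min_le_right _ _) (min_le_left _ _))
    gcongr
end
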